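/- arXiv:1308.6342 — 2 statements merged into one kernel-verified Lean document; each statement's English description precedes it below -/
import Mathlib

section
/- Uniqueness of the maximum likelihood distribution in a Gibbs family: Let p̃ be a probability distribution on configurations and let F be the set of all positive Gibbs distributions over C. If p₁ ∈ F and p₂ ∈ F both maximize the expected log-likelihood p ↦ Σ_x p̃(x)·log p(x) over F, then p₁ = p₂ as distributions. -/
open Finset

/-- A potential `E` on the subset `c` of sites: a real-valued function of
configurations that depends only on the coordinates in `c`. -/
def DependsOnlyOn {S : Type*} {V : S → Type*} (c : Finset S) (E : (∀ s, V s) → ℝ) : Prop :=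
  ∀ x y : ∀ s, V s, (∀ s ∈ c, x s = y s) → E x = E y

/-- A potential is normalized with respect to zero if it vanishes on every
configuration having a zero coordinate inside `c`. -/
def NormalizedZero {S : Type*} {V : S → Type*} [∀ s, Zero (V s)] (c : Finset S)
    (E : (∀ s, V s) → ℝ) : Prop :=
  ∀ x : ∀ s, V s, (∃ t ∈ c, x t = 0) → E x = 0

/-- `p` is a (positive, normalized) Gibbs distribution over the clique system `C`:
`p x = (1/Z) exp (−Σ_{c ∈ C} E_c(x_c))` for some partition constant `Z > 0` and
potentials `E_c` depending only on the coordinates in `c`, and `p` sums to one. -/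
def IsGibbsDistribution {S : Type*} {V : S → Type*} [Fintype S] [DecidableEq S]
    [∀ s, Fintype (V s)] (C : Finset (Finset S)) (p : (∀ s, V s) → ℝ) : Prop :=
  ∃ (E : Finset S → (∀ s, V s) → ℝ) (Z : ℝ), 0 < Z ∧
    (∀ c ∈ C, DependsOnlyOn c (E c)) ∧
    (∀ x, p x = (1 / Z) * Real.exp (-(∑ c ∈ C, E c x))) ∧
    (∑ x, p x = 1)

/-!
The normalized geometric mean `q = √(p₁ p₂) / B` of two Gibbs distributions is again Gibbs
(average the potentials), and its expected log-likelihood is the mean of those of `p₁` and `p₂`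
minus `log B`, where `B = Σ_x √(p₁ x p₂ x)` is the Bhattacharyya coefficient. If both `p₁` and
`p₂` are maximizers, `q` cannot beat either, so `log B ≥ 0`. But
`Σ_x (√p₁ x − √p₂ x)² = 2 − 2B`, so `B ≥ 1` forces `p₁ = p₂`.
-/

section Bhattacharyya

variable {α : Type*} [Fintype α]

noncomputable def bhattacharyyaCoeff (p q : α → ℝ) : ℝ := ∑ x, √(p x * q x)

lemma bhattacharyyaCoeff_pos {p q : α → ℝ} (hp : ∀ x, 0 < p x) (hq : ∀ x, 0 < q x)
    (hsum : ∑ x, p x = 1) : 0 < bhattacharyyaCoeff p q :=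
  sum_pos (fun x _ => Real.sqrt_pos.mpr (mul_pos (hp x) (hq x)))
    (nonempty_of_sum_ne_zero (hsum ▸ one_ne_zero))

lemma sum_sq_sqrt_sub_sqrt {p q : α → ℝ} (hp : ∀ x, 0 ≤ p x) (hq : ∀ x, 0 ≤ q x) :
    ∑ x, (√(p x) - √(q x)) ^ 2 = ∑ x, p x + ∑ x, q x - 2 * bhattacharyyaCoeff p q := by
  have expand : ∀ x, (√(p x) - √(q x)) ^ 2 = p x + q x - 2 * √(p x * q x) := fun x => by
    rw [sub_sq, Real.sq_sqrt (hp x), Real.sq_sqrt (hq x), Real.sqrt_mul (hp x)]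
    ring
  simp only [expand, sum_sub_distrib, sum_add_distrib, ← mul_sum, bhattacharyyaCoeff]

lemma eq_of_one_le_bhattacharyyaCoeff {p q : α → ℝ} (hp : ∀ x, 0 ≤ p x) (hq : ∀ x, 0 ≤ q x)
    (hp_sum : ∑ x, p x = 1) (hq_sum : ∑ x, q x = 1) (h : 1 ≤ bhattacharyyaCoeff p q) :
    p = q := by
  have hsq : ∑ x, (√(p x) - √(q x)) ^ 2 = 0 := by
    refine le_antisymm ?_ (sum_nonneg fun x _ => sq_nonneg _)
    rw [sum_sq_sqrt_sub_sqrt hp hq, hp_sum, hq_sum]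
    linarith
  funext x
  have hx := (sum_eq_zero_iff_of_nonneg (fun x _ => sq_nonneg _)).mp hsq x (mem_univ x)
  exact (Real.sqrt_inj (hp x) (hq x)).mp (sub_eq_zero.mp (pow_eq_zero_iff two_ne_zero |>.mp hx))

lemma log_sqrt_mul_div {a b c : ℝ} (ha : 0 < a) (hb : 0 < b) (hc : c ≠ 0) :
    Real.log (√(a * b) / c) = (Real.log a + Real.log b) / 2 - Real.log c := by
  rw [Real.log_div (Real.sqrt_pos.mpr (mul_pos ha hb)).ne' hc, Real.log_sqrt (mul_pos ha hb).le,
    Real.log_mul ha.ne' hb.ne']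

lemma sum_mul_log_sqrt_mul_div {w p q : α → ℝ} {c : ℝ} (hw : ∑ x, w x = 1)
    (hp : ∀ x, 0 < p x) (hq : ∀ x, 0 < q x) (hc : c ≠ 0) :
    ∑ x, w x * Real.log (√(p x * q x) / c)
      = (∑ x, w x * Real.log (p x) + ∑ x, w x * Real.log (q x)) / 2 - Real.log c := by
  simp only [log_sqrt_mul_div (hp _) (hq _) hc, mul_sub, mul_div_assoc', mul_add,
    sum_sub_distrib, ← sum_div, sum_add_distrib, ← sum_mul, hw, one_mul]

end Bhattacharyya

namespace IsGibbsDistribution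

variable {S : Type*} [Fintype S] [DecidableEq S] {V : S → Type*} [∀ s, Fintype (V s)]
  {C : Finset (Finset S)} {p p₁ p₂ : (∀ s, V s) → ℝ}

lemma pos (h : IsGibbsDistribution C p) (x : ∀ s, V s) : 0 < p x := by
  obtain ⟨E, Z, hZ, -, hp, -⟩ := h
  rw [hp x]
  positivity

lemma sum_eq_one (h : IsGibbsDistribution C p) : ∑ x, p x = 1 := by
  obtain ⟨-, -, -, -, -, hsum⟩ := h
  exact hsum

lemma normalized_geomMean (h₁ : IsGibbsDistribution C p₁) (h₂ : IsGibbsDistribution C p₂) :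
    IsGibbsDistribution C (fun x => √(p₁ x * p₂ x) / bhattacharyyaCoeff p₁ p₂) := by
  have hB := bhattacharyyaCoeff_pos h₁.pos h₂.pos h₁.sum_eq_one
  obtain ⟨E₁, Z₁, hZ₁, hdep₁, hp₁, -⟩ := h₁
  obtain ⟨E₂, Z₂, hZ₂, hdep₂, hp₂, -⟩ := h₂
  refine ⟨fun c x => (E₁ c x + E₂ c x) / 2, bhattacharyyaCoeff p₁ p₂ * √(Z₁ * Z₂),
    by positivity, fun c hc x y hxy => by simp only [hdep₁ c hc x y hxy, hdep₂ c hc x y hxy],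
    fun x => ?_, by rw [← sum_div]; exact div_self hB.ne'⟩
  have hprod : p₁ x * p₂ x = Real.exp (-(∑ c ∈ C, E₁ c x + ∑ c ∈ C, E₂ c x)) / (Z₁ * Z₂) := by
    rw [hp₁ x, hp₂ x, neg_add, Real.exp_add]
    field_simp
  have hsqrt : √(p₁ x * p₂ x)
      = Real.exp (-(∑ c ∈ C, (E₁ c x + E₂ c x) / 2)) / √(Z₁ * Z₂) := by
    rw [hprod, Real.sqrt_div' _ (by positivity), ← Real.exp_half, ← sum_div, sum_add_distrib,
      neg_div]
  dsimp only
  rw [hsqrt]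
  field_simp

end IsGibbsDistribution

theorem ml_unique_in_gibbs_family_general
    {S : Type*} [Fintype S] [DecidableEq S] {V : S → Type*}
    [∀ s, Fintype (V s)]
    (C : Finset (Finset S))
    (ptilde : (∀ s, V s) → ℝ)
    (hpt_sum : ∑ x, ptilde x = 1)
    (p₁ p₂ : (∀ s, V s) → ℝ)
    (h₁ : IsGibbsDistribution C p₁) (h₂ : IsGibbsDistribution C p₂)
    (hmax₁ : ∀ p : (∀ s, V s) → ℝ, IsGibbsDistribution C p →
      ∑ x, ptilde x * Real.log (p x) ≤ ∑ x, ptilde x * Real.log (p₁ x))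
    (hmax₂ : ∀ p : (∀ s, V s) → ℝ, IsGibbsDistribution C p →
      ∑ x, ptilde x * Real.log (p x) ≤ ∑ x, ptilde x * Real.log (p₂ x)) :
    p₁ = p₂ := by
  have hB := bhattacharyyaCoeff_pos h₁.pos h₂.pos h₁.sum_eq_one
  have hq := h₁.normalized_geomMean h₂
  have hLq := sum_mul_log_sqrt_mul_div hpt_sum h₁.pos h₂.pos hB.ne'
  have hq₁ := hmax₁ _ hq
  have hq₂ := hmax₂ _ hq
  have hlogB : 0 ≤ Real.log (bhattacharyyaCoeff p₁ p₂) := by linarith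
  exact eq_of_one_le_bhattacharyyaCoeff (fun x => (h₁.pos x).le) (fun x => (h₂.pos x).le)
    h₁.sum_eq_one h₂.sum_eq_one ((Real.log_nonneg_iff hB).mp hlogB)

/-- **Uniqueness of the maximum likelihood distribution in a Gibbs family.** If
two positive Gibbs distributions over `C` both maximize the expected
log-likelihood `p ↦ Σ_x p̃(x) log p(x)` over the family of all positive Gibbs
distributions over `C`, then they are equal as distributions. -/
theorem ml_unique_in_gibbs_family
    {S : Type*} [Fintype S] [DecidableEq S] {V : S → Type*}
    [∀ s, Fintype (V s)] [∀ s, DecidableEq (V s)]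
    (C : Finset (Finset S)) (hC : ∀ c ∈ C, c.Nonempty)
    (ptilde : (∀ s, V s) → ℝ)
    (hpt_nonneg : ∀ x, 0 ≤ ptilde x) (hpt_sum : ∑ x, ptilde x = 1)
    (p₁ p₂ : (∀ s, V s) → ℝ)
    (h₁ : IsGibbsDistribution C p₁) (h₂ : IsGibbsDistribution C p₂)
    (hmax₁ : ∀ p : (∀ s, V s) → ℝ, IsGibbsDistribution C p →
      ∑ x, ptilde x * Real.log (p x) ≤ ∑ x, ptilde x * Real.log (p₁ x))
    (hmax₂ : ∀ p : (∀ s, V s) → ℝ, IsGibbsDistribution C p →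
      ∑ x, ptilde x * Real.log (p x) ≤ ∑ x, ptilde x * Real.log (p₂ x)) :
    p₁ = p₂ :=
  ml_unique_in_gibbs_family_general C ptilde hpt_sum p₁ p₂ h₁ h₂ hmax₁ hmax₂
end

section
/- Equality of the clique-q normalized potentials of the joint and marginal maximum likelihood estimates (corollary to Theorem 2): Under the hypotheses of Theorem 2 (p̃ a strictly positive probability distribution on configurations, p̂(x) = p̃_{A_q}(x_{A_q})·p̃_{S∖q}(x_{S∖q})/p̃_{A_q∖q}(x_{A_q∖q}) belonging to the set F of all positive Gibbs distributions over C, and p* ∈ F a maximizer of p ↦ Σ_x p̃(x)·log p(x) over F), write p* with zero-normalized potentials: p*(x) = (1/Z)·exp(−Σ_c G_c(x_c)), the sum over all nonempty c ⊆ S with each G_c normalized with respect to zero, and write the marginal p̃_{A_q} with zero-normalized potentials: p̃_{A_q}(y) = (1/Z')·exp(−Σ_c H_c(y_c)), the sum over all nonempty c ⊆ A_q with each H_c normalized with respect to zero. Then G_q = H_q. -/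
open Finset

/-- The marginal of `p` on `U`: `p_U(y) = Σ { p x : x_U = y }`. -/
def marginal {S : Type*} {V : S → Type*} [Fintype S] [DecidableEq S]
    [∀ s, Fintype (V s)] [∀ s, DecidableEq (V s)]
    (p : (∀ s, V s) → ℝ) (U : Finset S) (y : ∀ s : U, V s) : ℝ :=
  ∑ x ∈ Finset.univ.filter (fun x : ∀ s, V s => ∀ s : U, x s.1 = y s), p x

/-- A potential on `c ⊆ A`, viewed as a function of configurations of `A`:
it depends only on the coordinates in `c`. -/
def DependsOnlyOnSub {S : Type*} {V : S → Type*} (A c : Finset S)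
    (F : (∀ s : A, V s) → ℝ) : Prop :=
  ∀ y z : ∀ s : A, V s, (∀ s : A, s.1 ∈ c → y s = z s) → F y = F z

/-- Zero-normalization for a potential on `c ⊆ A` viewed as a function of
configurations of `A`. -/
def NormalizedZeroSub {S : Type*} {V : S → Type*} [∀ s, Zero (V s)] (A c : Finset S)
    (F : (∀ s : A, V s) → ℝ) : Prop :=
  ∀ y : ∀ s : A, V s, (∃ s : A, s.1 ∈ c ∧ y s = 0) → F y = 0

/-! The Markov combination `p̂ = p̃_A p̃_{S∖q} / p̃_{A∖q}` has the same marginals as `p̃` on `A` and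
on `S ∖ q`, and every clique lies in one of these two sets, so `p̂` and `p̃` have the same clique
moments. The log-likelihood of a Gibbs distribution is affine in its clique moments, hence takes the
same value under `p̃` and `p̂`; Gibbs' inequality then forces the maximizer `p*` to equal `p̂`.

Zero-normalized potentials are recovered from the log-density by Möbius inversion over the subsets
`b ⊆ q`, evaluated at `x` with the coordinates outside `b` set to zero:
`G_q(x) = Σ_{b ⊆ q} (-1)^{|q ∖ b|} (-log p*(x^b))`. Since `log p̂` and `log p̃_A` differ by a
function of `x_{S∖q}`, which this alternating sum annihilates, `G_q = H_q`. -/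

lemma DependsOnlyOn.mono {S : Type*} {V : S → Type*} {c d : Finset S} {E : (∀ s, V s) → ℝ}
    (hE : DependsOnlyOn c E) (hcd : c ⊆ d) : DependsOnlyOn d E :=
  fun x y hxy => hE x y fun s hs => hxy s (hcd hs)

section Lifts

variable {S : Type*} {V : S → Type*} {A c : Finset S} {F : (∀ s : A, V s) → ℝ}

lemma DependsOnlyOnSub.comp_restrict (hF : DependsOnlyOnSub A c F) :
    DependsOnlyOn c fun x => F (A.restrict x) :=
  fun _ _ hxy => hF _ _ fun s hs => hxy s hs

lemma NormalizedZeroSub.comp_restrict [∀ s, Zero (V s)] (hF : NormalizedZeroSub A c F)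
    (hcA : c ⊆ A) : NormalizedZero c fun x => F (A.restrict x) :=
  fun _ ⟨t, htc, ht⟩ => hF _ ⟨⟨t, hcA htc⟩, htc, ht⟩

end Lifts

section Neighborhood

variable {S : Type*} [DecidableEq S]

def oneNeighborhood (C : Finset (Finset S)) (q : Finset S) : Finset S :=
  (C.filter fun c => (c ∩ q).Nonempty).biUnion id

lemma subset_oneNeighborhood_of_inter_nonempty {C : Finset (Finset S)} {c q : Finset S}
    (hc : c ∈ C) (hcq : (c ∩ q).Nonempty) : c ⊆ oneNeighborhood C q :=
  subset_biUnion_of_mem id (mem_filter.mpr ⟨hc, hcq⟩)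

lemma subset_oneNeighborhood_or_disjoint {C : Finset (Finset S)} {c : Finset S} (hc : c ∈ C)
    (q : Finset S) : c ⊆ oneNeighborhood C q ∨ Disjoint c q := by
  rw [disjoint_iff_inter_eq_empty, ← not_nonempty_iff_eq_empty]
  exact (em _).imp (subset_oneNeighborhood_of_inter_nonempty hc) id

end Neighborhood

section Marginals

variable {S : Type*} [Fintype S] [DecidableEq S] {V : S → Type*}
  [∀ s, Fintype (V s)] [∀ s, DecidableEq (V s)]

def fiber (U : Finset S) (x : ∀ s, V s) : Finset (∀ s, V s) :=
  univ.filter fun y => ∀ s ∈ U, y s = x s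

@[simp]
lemma mem_fiber {U : Finset S} {x y : ∀ s, V s} : y ∈ fiber U x ↔ ∀ s ∈ U, y s = x s := by
  simp [fiber]

lemma restrict_eq_of_mem_fiber {U W : Finset S} {x y : ∀ s, V s} (hy : y ∈ fiber U x)
    (hWU : W ⊆ U) : W.restrict y = W.restrict x := by
  funext s
  exact mem_fiber.mp hy s (hWU s.2)

lemma marginal_restrict (p : (∀ s, V s) → ℝ) (U : Finset S) (x : ∀ s, V s) :
    marginal p U (U.restrict x) = ∑ y ∈ fiber U x, p y := by
  unfold marginal
  congr 1
  ext y
  simp [restrict]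

lemma marginal_pos {p : (∀ s, V s) → ℝ} (hp : ∀ x, 0 < p x) (U : Finset S) (x : ∀ s, V s) :
    0 < marginal p U (U.restrict x) := by
  rw [marginal_restrict]
  exact sum_pos (fun y _ => hp y) ⟨x, mem_fiber.mpr fun _ _ => rfl⟩

lemma dependsOnlyOn_marginal (p : (∀ s, V s) → ℝ) (U : Finset S) :
    DependsOnlyOn U fun x => marginal p U (U.restrict x) :=
  fun _ _ hxy => congrArg (marginal p U) (funext fun s => hxy s s.2)

lemma sum_mul_marginal (p F : (∀ s, V s) → ℝ) (U : Finset S) :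
    ∑ x, F x * marginal p U (U.restrict x) = ∑ x, p x * ∑ y ∈ fiber U x, F y := by
  calc ∑ x, F x * marginal p U (U.restrict x) = ∑ x, ∑ y ∈ fiber U x, F x * p y := by
        simp_rw [marginal_restrict, mul_sum]
    _ = ∑ y, ∑ x ∈ fiber U y, F x * p y := sum_comm' fun x y => by
        simp only [mem_univ, mem_fiber, true_and, and_true]
        exact ⟨fun h s hs => (h s hs).symm, fun h s hs => (h s hs).symm⟩
    _ = ∑ x, p x * ∑ y ∈ fiber U x, F y := by simp_rw [mul_sum, mul_comm]

lemma sum_fiber_marginal_of_union_eq_univ (p : (∀ s, V s) → ℝ) {U W : Finset S}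
    (hUW : U ∪ W = univ) (x : ∀ s, V s) :
    ∑ y ∈ fiber U x, marginal p W (W.restrict y) = marginal p (U ∩ W) ((U ∩ W).restrict x) := by
  simp_rw [marginal_restrict]
  rw [sum_comm' (t' := fiber (U ∩ W) x) (s' := fun z => {U.piecewise x z})]
  · simp
  intro y z
  have hW : ∀ s, s ∉ U → s ∈ W := fun s hs => (mem_union.mp (hUW ▸ mem_univ s)).resolve_left hs
  simp only [mem_fiber, mem_singleton, mem_inter, funext_iff]
  constructor
  · rintro ⟨hy, hz⟩
    refine ⟨fun s => ?_, fun s hs => (hz s hs.2).trans (hy s hs.1)⟩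
    by_cases hs : s ∈ U
    · simp [hs, hy s hs]
    · simp [hs, hz s (hW s hs)]
  · rintro ⟨hy, hz⟩
    refine ⟨fun s hs => by simp [hy s, hs], fun s hs => ?_⟩
    by_cases hs' : s ∈ U
    · simp [hy s, hs', hz s ⟨hs', hs⟩]
    · simp [hy s, hs']

noncomputable def markovCombination (p : (∀ s, V s) → ℝ) (U W : Finset S) (x : ∀ s, V s) : ℝ :=
  marginal p U (U.restrict x) * marginal p W (W.restrict x) /
    marginal p (U ∩ W) ((U ∩ W).restrict x)

lemma log_markovCombination {p : (∀ s, V s) → ℝ} (hp : ∀ x, 0 < p x) (U W : Finset S)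
    (x : ∀ s, V s) :
    Real.log (markovCombination p U W x) =
      Real.log (marginal p U (U.restrict x)) + Real.log (marginal p W (W.restrict x)) -
        Real.log (marginal p (U ∩ W) ((U ∩ W).restrict x)) := by
  have hpos := fun U : Finset S => (marginal_pos hp U x).ne'
  rw [markovCombination, Real.log_div (mul_ne_zero (hpos U) (hpos W)) (hpos _),
    Real.log_mul (hpos U) (hpos W)]

lemma markovCombination_comm (p : (∀ s, V s) → ℝ) (U W : Finset S) :
    markovCombination p U W = markovCombination p W U := by
  funext x
  rw [markovCombination, markovCombination, inter_comm U W, mul_comm]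

lemma sum_markovCombination_mul_of_dependsOnlyOn_left {p g : (∀ s, V s) → ℝ} (hp : ∀ x, 0 < p x)
    {U W : Finset S} (hUW : U ∪ W = univ) (hg : DependsOnlyOn U g) :
    ∑ x, markovCombination p U W x * g x = ∑ x, p x * g x := by
  set pUW := fun x : ∀ s, V s => marginal p (U ∩ W) ((U ∩ W).restrict x)
  calc ∑ x, markovCombination p U W x * g x
        = ∑ x, marginal p W (W.restrict x) * g x / pUW x * marginal p U (U.restrict x) := by
        congr 1 with x
        simp only [markovCombination, pUW]
        ring
    _ = ∑ x, p x * ∑ y ∈ fiber U x, marginal p W (W.restrict y) * g y / pUW y :=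
        sum_mul_marginal _ _ _
    _ = ∑ x, p x * (g x / pUW x * ∑ y ∈ fiber U x, marginal p W (W.restrict y)) := by
        congr 1 with x
        congr 1
        rw [mul_sum]
        refine sum_congr rfl fun y hy => ?_
        rw [hg y x (mem_fiber.mp hy), show pUW y = pUW x from
          congrArg (marginal p _) (restrict_eq_of_mem_fiber hy inter_subset_left)]
        ring
    _ = ∑ x, p x * g x := by
        congr 1 with x
        rw [sum_fiber_marginal_of_union_eq_univ p hUW, div_mul_cancel₀ _ (marginal_pos hp _ _).ne']

lemma sum_markovCombination_mul_of_dependsOnlyOn_right {p g : (∀ s, V s) → ℝ}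
    (hp : ∀ x, 0 < p x) {U W : Finset S} (hUW : U ∪ W = univ) (hg : DependsOnlyOn W g) :
    ∑ x, markovCombination p U W x * g x = ∑ x, p x * g x := by
  rw [markovCombination_comm]
  exact sum_markovCombination_mul_of_dependsOnlyOn_left hp (union_comm U W ▸ hUW) hg

end Marginals

open InformationTheory in
lemma eq_of_sum_mul_log_le {α : Type*} [Fintype α] {p r : α → ℝ} (hp : ∀ a, 0 < p a)
    (hr : ∀ a, 0 < r a) (hsum : ∑ a, p a = ∑ a, r a)
    (hle : ∑ a, p a * Real.log (p a) ≤ ∑ a, p a * Real.log (r a)) : r = p := by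
  -- `∑ a, D a = KL(p ‖ r)`, which `hle` makes nonpositive.
  set D := fun a => r a * klFun (p a / r a)
  have hD_nonneg : ∀ a, 0 ≤ D a := fun a =>
    mul_nonneg (hr a).le (klFun_nonneg (div_pos (hp a) (hr a)).le)
  have hD_apply : ∀ a, D a = p a * Real.log (p a) - p a * Real.log (r a) + (r a - p a) := by
    intro a
    have hra := (hr a).ne'
    simp only [D, klFun_apply, Real.log_div (hp a).ne' hra]
    field_simp
    ring
  have hD_sum : ∑ a, D a = 0 := by
    refine le_antisymm ?_ (sum_nonneg fun a _ => hD_nonneg a)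
    simp only [hD_apply, sum_add_distrib, sum_sub_distrib, hsum]
    linarith
  funext a
  have hDa := (sum_eq_zero_iff_of_nonneg fun a _ => hD_nonneg a).mp hD_sum a (mem_univ a)
  rw [mul_eq_zero, or_iff_right (hr a).ne', klFun_eq_zero_iff
    (div_pos (hp a) (hr a)).le, div_eq_one_iff_eq (hr a).ne'] at hDa
  exact hDa.symm

section Gibbs

variable {S : Type*} [Fintype S] [DecidableEq S] {V : S → Type*} [∀ s, Fintype (V s)]
  {C : Finset (Finset S)}

def MatchesCliqueMoments (C : Finset (Finset S)) (p p' : (∀ s, V s) → ℝ) : Prop :=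
  ∀ c ∈ C, ∀ g : (∀ s, V s) → ℝ, DependsOnlyOn c g → ∑ x, p x * g x = ∑ x, p' x * g x

lemma IsGibbsDistribution.pos_s11 {p : (∀ s, V s) → ℝ} (hp : IsGibbsDistribution C p) (x : ∀ s, V s) :
    0 < p x := by
  obtain ⟨E, Z, hZ, -, hrep, -⟩ := hp
  rw [hrep]
  positivity

lemma IsGibbsDistribution.sum_eq_one_s11 {p : (∀ s, V s) → ℝ} (hp : IsGibbsDistribution C p) :
    ∑ x, p x = 1 := by
  obtain ⟨-, -, -, -, -, hsum⟩ := hp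
  exact hsum

lemma IsGibbsDistribution.sum_mul_log_eq {r p p' : (∀ s, V s) → ℝ}
    (hr : IsGibbsDistribution C r) (hmom : MatchesCliqueMoments C p p')
    (hp : ∑ x, p x = 1) (hp' : ∑ x, p' x = 1) :
    ∑ x, p x * Real.log (r x) = ∑ x, p' x * Real.log (r x) := by
  obtain ⟨E, Z, hZ, hdep, hrep, -⟩ := hr
  have hlog : ∀ π : (∀ s, V s) → ℝ, ∑ x, π x = 1 →
      ∑ x, π x * Real.log (r x) = -Real.log Z - ∑ c ∈ C, ∑ x, π x * E c x := by
    intro π hπ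
    have hlog_r : ∀ x, Real.log (r x) = -Real.log Z - ∑ c ∈ C, E c x := fun x => by
      rw [hrep, Real.log_mul (by positivity) (Real.exp_ne_zero _), Real.log_exp, one_div,
        Real.log_inv]
      ring
    simp_rw [hlog_r, mul_sub, mul_sum, sum_sub_distrib, ← sum_mul, hπ]
    rw [sum_comm]
    ring
  rw [hlog p hp, hlog p' hp']
  congr 1
  exact sum_congr rfl fun c hc => hmom c hc (E c) (hdep c hc)

lemma IsGibbsDistribution.eq_of_matchesCliqueMoments {ptilde phat pstar : (∀ s, V s) → ℝ}
    (hstar : IsGibbsDistribution C pstar) (hphat : IsGibbsDistribution C phat)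
    (hmom : MatchesCliqueMoments C phat ptilde) (hpt : ∑ x, ptilde x = 1)
    (hle : ∑ x, ptilde x * Real.log (phat x) ≤ ∑ x, ptilde x * Real.log (pstar x)) :
    pstar = phat := by
  have hph := hphat.sum_eq_one_s11
  refine eq_of_sum_mul_log_le hphat.pos_s11 hstar.pos_s11 (hph.trans hstar.sum_eq_one_s11.symm) ?_
  rwa [hphat.sum_mul_log_eq hmom hph hpt, hstar.sum_mul_log_eq hmom hph hpt]

lemma matchesCliqueMoments_markovCombination [∀ s, DecidableEq (V s)] {p : (∀ s, V s) → ℝ}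
    (hp : ∀ x, 0 < p x) {U q : Finset S} (hqU : q ⊆ U) (hC : ∀ c ∈ C, c ⊆ U ∨ Disjoint c q) :
    MatchesCliqueMoments C (markovCombination p U (univ \ q)) p := by
  have hcover : U ∪ (univ \ q) = univ :=
    eq_univ_of_forall fun s => if hs : s ∈ q then mem_union_left _ (hqU hs) else by simp [hs]
  intro c hc g hg
  rcases hC c hc with hcU | hcq
  · exact sum_markovCombination_mul_of_dependsOnlyOn_left hp hcover (hg.mono hcU)
  · exact sum_markovCombination_mul_of_dependsOnlyOn_right hp hcover
      (hg.mono (subset_sdiff.mpr ⟨subset_univ c, hcq⟩))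

end Gibbs

section Mobius

variable {S : Type*} [DecidableEq S]

lemma sum_powerset_filter_superset_neg_one_pow (c q : Finset S) :
    ∑ b ∈ q.powerset with c ⊆ b, (-1 : ℝ) ^ (q \ b).card = if c = q then 1 else 0 := by
  by_cases hcq : c ⊆ q
  · have hbij : ∑ b ∈ q.powerset with c ⊆ b, (-1 : ℝ) ^ (q \ b).card
        = ∑ d ∈ (q \ c).powerset, (-1 : ℝ) ^ d.card := by
      refine sum_nbij' (q \ ·) (q \ ·) ?_ ?_ ?_ ?_ fun _ _ => rfl
      · intro b hb
        simp only [mem_filter, mem_powerset] at hb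
        simpa using sdiff_subset_sdiff le_rfl hb.2
      · intro d hd
        simp only [mem_powerset] at hd
        simp only [mem_filter, mem_powerset]
        exact ⟨sdiff_subset, subset_sdiff.mpr
          ⟨hcq, disjoint_left.mpr fun a hac had => (mem_sdiff.mp (hd had)).2 hac⟩⟩
      · intro b hb
        simp only [mem_filter, mem_powerset] at hb
        exact Finset.sdiff_sdiff_eq_self hb.1
      · intro d hd
        simp only [mem_powerset] at hd
        exact Finset.sdiff_sdiff_eq_self (hd.trans sdiff_subset)
    rw [hbij]
    have hint := congrArg (Int.cast : ℤ → ℝ) (sum_powerset_neg_one_pow_card (x := q \ c))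
    push_cast at hint
    rw [hint]
    exact if_congr (sdiff_eq_empty_iff_subset.trans
      ⟨fun h => hcq.antisymm h, fun h => h ▸ le_rfl⟩) rfl rfl
  · rw [if_neg fun h => hcq h.le]
    refine sum_eq_zero fun b hb => absurd ?_ hcq
    simp only [mem_filter, mem_powerset] at hb
    exact hb.2.trans hb.1

lemma sum_powerset_neg_one_pow_card_sdiff {q : Finset S} (hq : q.Nonempty) :
    ∑ b ∈ q.powerset, (-1 : ℝ) ^ (q \ b).card = 0 := by
  simpa [hq.ne_empty.symm] using sum_powerset_filter_superset_neg_one_pow ∅ q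

lemma sum_powerset_neg_one_pow_mul_sum_subset {T : Finset (Finset S)} {q : Finset S} (hq : q ∈ T)
    (F : Finset S → ℝ) :
    ∑ b ∈ q.powerset, (-1 : ℝ) ^ (q \ b).card * ∑ c ∈ T with c ⊆ b, F c = F q := by
  simp_rw [sum_filter, mul_sum]
  rw [sum_comm]
  calc ∑ c ∈ T, ∑ b ∈ q.powerset, (-1 : ℝ) ^ (q \ b).card * (if c ⊆ b then F c else 0)
      = ∑ c ∈ T, (if c = q then 1 else 0) * F c := by
        refine sum_congr rfl fun c _ => ?_
        rw [← sum_powerset_filter_superset_neg_one_pow, sum_filter, sum_mul]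
        refine sum_congr rfl fun b _ => ?_
        split_ifs <;> ring
    _ = F q := by simp [hq]

end Mobius

section ZeroMobius

variable {S : Type*} [DecidableEq S] {V : S → Type*} [∀ s, Zero (V s)]

noncomputable def zeroMobius (q : Finset S) (f : (∀ s, V s) → ℝ) (x : ∀ s, V s) : ℝ :=
  ∑ b ∈ q.powerset, (-1 : ℝ) ^ (q \ b).card * f (b.piecewise x 0)

lemma NormalizedZero.apply_piecewise_zero {c : Finset S} {G : (∀ s, V s) → ℝ}
    (hnorm : NormalizedZero c G) (hdep : DependsOnlyOn c G) (b : Finset S) (x : ∀ s, V s) :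
    G (b.piecewise x 0) = if c ⊆ b then G x else 0 := by
  split_ifs with hcb
  · exact hdep _ _ fun s hs => piecewise_eq_of_mem _ _ _ (hcb hs)
  · obtain ⟨t, htc, htb⟩ := not_subset.mp hcb
    exact hnorm _ ⟨t, htc, piecewise_eq_of_notMem _ _ _ htb⟩

lemma zeroMobius_sum_potentials {T : Finset (Finset S)} {q : Finset S} (hq : q ∈ T)
    {G : Finset S → (∀ s, V s) → ℝ} (hdep : ∀ c ∈ T, DependsOnlyOn c (G c))
    (hnorm : ∀ c ∈ T, NormalizedZero c (G c)) (x : ∀ s, V s) :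
    zeroMobius q (fun y => ∑ c ∈ T, G c y) x = G q x := by
  have hsum : ∀ b : Finset S, ∑ c ∈ T, G c (b.piecewise x 0) = ∑ c ∈ T with c ⊆ b, G c x :=
    fun b => by
      rw [sum_filter]
      exact sum_congr rfl fun c hc => (hnorm c hc).apply_piecewise_zero (hdep c hc) b x
  simp only [zeroMobius, hsum]
  exact sum_powerset_neg_one_pow_mul_sum_subset hq fun c => G c x

lemma zeroMobius_add_of_dependsOnlyOn {q W : Finset S} (hq : q.Nonempty) (hqW : Disjoint q W)
    {f g k : (∀ s, V s) → ℝ} (hk : DependsOnlyOn W k) (hfgk : ∀ y, f y = g y + k y)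
    (x : ∀ s, V s) : zeroMobius q f x = zeroMobius q g x := by
  have hk_const : ∀ b ∈ q.powerset, k (b.piecewise x 0) = k ((∅ : Finset S).piecewise x 0) :=
    fun b hb => hk _ _ fun s hs => by
      have hsb : s ∉ b := fun hsb => disjoint_right.mp hqW hs (mem_powerset.mp hb hsb)
      simp [hsb]
  calc zeroMobius q f x
      = zeroMobius q g x + (∑ b ∈ q.powerset, (-1 : ℝ) ^ (q \ b).card) *
          k ((∅ : Finset S).piecewise x 0) := by
        simp only [zeroMobius, hfgk, mul_add, sum_add_distrib, sum_mul]
        congr 1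
        exact sum_congr rfl fun b hb => by rw [hk_const b hb]
    _ = zeroMobius q g x := by rw [sum_powerset_neg_one_pow_card_sdiff hq, zero_mul, add_zero]

lemma potential_eq_zeroMobius_neg_log {T : Finset (Finset S)} {q : Finset S} (hq : q ∈ T)
    (hqne : q.Nonempty) {G : Finset S → (∀ s, V s) → ℝ} (hdep : ∀ c ∈ T, DependsOnlyOn c (G c))
    (hnorm : ∀ c ∈ T, NormalizedZero c (G c)) {p : (∀ s, V s) → ℝ} {Z : ℝ} (hZ : 0 < Z)
    (hrep : ∀ x, p x = 1 / Z * Real.exp (-(∑ c ∈ T, G c x))) (x : ∀ s, V s) :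
    G q x = zeroMobius q (fun y => -Real.log (p y)) x := by
  rw [← zeroMobius_sum_potentials hq hdep hnorm]
  refine zeroMobius_add_of_dependsOnlyOn hqne (disjoint_empty_right q)
    (k := fun _ => -Real.log Z) (fun _ _ _ => rfl) (fun y => ?_) x
  rw [hrep, Real.log_mul (by positivity) (Real.exp_ne_zero _), Real.log_exp, one_div,
    Real.log_inv]
  ring

end ZeroMobius

lemma zeroMobius_neg_log_markovCombination {S : Type*} [Fintype S] [DecidableEq S] {V : S → Type*}
    [∀ s, Fintype (V s)] [∀ s, DecidableEq (V s)] [∀ s, Zero (V s)] {p : (∀ s, V s) → ℝ}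
    (hp : ∀ x, 0 < p x) {U q : Finset S} (hq : q.Nonempty) (x : ∀ s, V s) :
    zeroMobius q (fun y => -Real.log (markovCombination p U (univ \ q) y)) x =
      zeroMobius q (fun y => -Real.log (marginal p U (U.restrict y))) x := by
  refine zeroMobius_add_of_dependsOnlyOn (W := univ \ q) hq disjoint_sdiff
    (k := fun y => Real.log (marginal p (U ∩ (univ \ q)) ((U ∩ (univ \ q)).restrict y)) -
      Real.log (marginal p (univ \ q) ((univ \ q).restrict y))) (fun y z hyz => ?_) (fun y => ?_) x
  · simp only [dependsOnlyOn_marginal p _ y z hyz,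
      (dependsOnlyOn_marginal p _).mono inter_subset_right y z hyz]
  · rw [log_markovCombination hp]
    ring

/-- **Equality of the clique-`q` normalized potentials of the joint and marginal
maximum likelihood estimates (corollary to Theorem 2).** Under the hypotheses of
Theorem 2, write the maximizer `p*` with zero-normalized potentials `G_c` over
all nonempty subsets `c ⊆ S`, and write the marginal `p̃_A` with zero-normalized
potentials `H_c` over all nonempty subsets `c ⊆ A`. Then `G_q = H_q`. -/
theorem joint_and_marginal_normalized_potentials_agree_on_q
    {S : Type*} [Fintype S] [DecidableEq S] {V : S → Type*}
    [∀ s, Fintype (V s)] [∀ s, DecidableEq (V s)] [∀ s, Zero (V s)]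
    (C : Finset (Finset S)) (hC : ∀ c ∈ C, c.Nonempty)
    (q : Finset S) (hq : q ∈ C)
    (A : Finset S) (hA : A = (C.filter fun c => (c ∩ q).Nonempty).biUnion id)
    (ptilde : (∀ s, V s) → ℝ)
    (hpt_pos : ∀ x, 0 < ptilde x) (hpt_sum : ∑ x, ptilde x = 1)
    (phat : (∀ s, V s) → ℝ)
    (hphat : ∀ x, phat x =
      marginal ptilde A (A.restrict x) *
        marginal ptilde (Finset.univ \ q) ((Finset.univ \ q).restrict x) /
        marginal ptilde (A \ q) ((A \ q).restrict x))
    (hphatF : IsGibbsDistribution C phat)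
    (pstar : (∀ s, V s) → ℝ)
    (hstar : IsGibbsDistribution C pstar)
    (hmax : ∀ p : (∀ s, V s) → ℝ, IsGibbsDistribution C p →
      ∑ x, ptilde x * Real.log (p x) ≤ ∑ x, ptilde x * Real.log (pstar x))
    (Z : ℝ) (hZ : 0 < Z)
    (G : Finset S → (∀ s, V s) → ℝ)
    (hGdep : ∀ c : Finset S, c.Nonempty → DependsOnlyOn c (G c))
    (hGnorm : ∀ c : Finset S, c.Nonempty → NormalizedZero c (G c))
    (hGrep : ∀ x, pstar x = (1 / Z) *
      Real.exp (-(∑ c ∈ Finset.univ.powerset.filter (fun c : Finset S => c.Nonempty), G c x)))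
    (Z' : ℝ) (hZ' : 0 < Z')
    (H : Finset S → (∀ s : A, V s) → ℝ)
    (hHdep : ∀ c : Finset S, c ⊆ A → c.Nonempty → DependsOnlyOnSub A c (H c))
    (hHnorm : ∀ c : Finset S, c ⊆ A → c.Nonempty → NormalizedZeroSub A c (H c))
    (hHrep : ∀ y : ∀ s : A, V s,
      marginal ptilde A y =
        (1 / Z') * Real.exp (-(∑ c ∈ A.powerset.filter (fun c => c.Nonempty), H c y))) :
    ∀ x : ∀ s, V s, G q x = H q (A.restrict x) := by
  intro x
  change A = oneNeighborhood C q at hA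
  have hqne := hC q hq
  have hqA : q ⊆ A := hA ▸ subset_oneNeighborhood_of_inter_nonempty hq (by rwa [inter_self])
  have hphat_eq : phat = markovCombination ptilde A (univ \ q) := by
    funext y
    rw [hphat, markovCombination, show A ∩ (univ \ q) = A \ q by ext; simp]
  have hmom : MatchesCliqueMoments C phat ptilde := hphat_eq ▸
    matchesCliqueMoments_markovCombination hpt_pos hqA
      fun c hc => hA ▸ subset_oneNeighborhood_or_disjoint hc q
  have hstar_eq : pstar = phat :=
    hstar.eq_of_matchesCliqueMoments hphatF hmom hpt_sum (hmax phat hphatF)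
  have hGq : G q x = zeroMobius q (fun y => -Real.log (pstar y)) x :=
    potential_eq_zeroMobius_neg_log (mem_filter.mpr ⟨mem_powerset.mpr (subset_univ q), hqne⟩) hqne
      (fun c hc => hGdep c (mem_filter.mp hc).2) (fun c hc => hGnorm c (mem_filter.mp hc).2) hZ
      hGrep x
  have hHq : H q (A.restrict x) =
      zeroMobius q (fun y => -Real.log (marginal ptilde A (A.restrict y))) x := by
    refine potential_eq_zeroMobius_neg_log (G := fun c y => H c (A.restrict y))
      (mem_filter.mpr ⟨mem_powerset.mpr hqA, hqne⟩) hqne (fun c hc => ?_) (fun c hc => ?_) hZ'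
      (fun y => hHrep (A.restrict y)) x
    all_goals rw [mem_filter, mem_powerset] at hc
    · exact (hHdep c hc.1 hc.2).comp_restrict
    · exact (hHnorm c hc.1 hc.2).comp_restrict hc.1
  rw [hGq, hHq, hstar_eq, hphat_eq]
  exact zeroMobius_neg_log_markovCombination hpt_pos hqne x
end
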